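/- Let α ∈ (−π/4, π/4) and set λ = (cos α − sin α)^{1/3}, μ = (cos α + sin α)^{1/3}. Let θ₀ be the unique angle in (−π/4, π/4) with cos θ₀ = (λ+μ)/√(2(λ²+μ²)) and sin θ₀ = (λ−μ)/√(2(λ²+μ²)). Then cos(θ₀+α) + √(cos(2θ₀)·cos(2α)) = (λ²+μ²)^{3/2}/√2 = (1/√2)·((1−sin(2α))^{1/3} + (1+sin(2α))^{1/3})^{3/2}. -/

import Mathlib

open Real

/-!
With `l³ = cos α - sin α` and `m³ = cos α + sin α` one has `cos 2α = l³m³` and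
`1 ∓ sin 2α = (cos α ∓ sin α)² = l⁶, m⁶`. Writing `S = √(2(l² + m²))`, the prescribed `cos θ₀`
and `sin θ₀` give `cos (θ₀ + α) = (l(cos α - sin α) + m(cos α + sin α))/S = (l⁴ + m⁴)/S` and
`cos 2θ₀ = 4lm/S²`, hence `√(cos 2θ₀ cos 2α) = 2l²m²/S`. The two terms add up to
`(l² + m²)²/S = (l² + m²)^{3/2}/√2`.
-/

lemma sqrt_two_mul_cos_add_pi_div_four (α : ℝ) : √2 * cos (α + π / 4) = cos α - sin α := by
  rw [cos_add, cos_pi_div_four, sin_pi_div_four]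
  linear_combination (cos α - sin α) / 2 * mul_self_sqrt (zero_le_two : (0 : ℝ) ≤ 2)

lemma sqrt_two_mul_cos_sub_pi_div_four (α : ℝ) : √2 * cos (α - π / 4) = cos α + sin α := by
  rw [cos_sub, cos_pi_div_four, sin_pi_div_four]
  linear_combination (cos α + sin α) / 2 * mul_self_sqrt (zero_le_two : (0 : ℝ) ≤ 2)

lemma cos_sub_sin_pos {α : ℝ} (hα : α ∈ Set.Ioo (-(3 * π / 4)) (π / 4)) :
    0 < cos α - sin α := by
  rw [← sqrt_two_mul_cos_add_pi_div_four]
  exact mul_pos (by positivity) (cos_pos_of_mem_Ioo ⟨by linarith [hα.1], by linarith [hα.2]⟩)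

lemma cos_add_sin_pos {α : ℝ} (hα : α ∈ Set.Ioo (-(π / 4)) (3 * π / 4)) :
    0 < cos α + sin α := by
  rw [← sqrt_two_mul_cos_sub_pi_div_four]
  exact mul_pos (by positivity) (cos_pos_of_mem_Ioo ⟨by linarith [hα.1], by linarith [hα.2]⟩)

lemma one_sub_sin_two_mul (α : ℝ) : 1 - sin (2 * α) = (cos α - sin α) ^ 2 := by
  rw [sin_two_mul]
  linear_combination -sin_sq_add_cos_sq α

lemma one_add_sin_two_mul (α : ℝ) : 1 + sin (2 * α) = (cos α + sin α) ^ 2 := by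
  rw [sin_two_mul]
  linear_combination -sin_sq_add_cos_sq α

lemma rpow_one_third_pow_three {x : ℝ} (hx : 0 ≤ x) : (x ^ ((1 : ℝ) / 3)) ^ 3 = x := by
  simpa using rpow_inv_natCast_pow hx three_ne_zero

lemma rpow_three_halves {t : ℝ} (ht : 0 ≤ t) : t ^ ((3 : ℝ) / 2) = t * √t := by
  rw [show (3 : ℝ) / 2 = 1 + 1 / 2 by norm_num, rpow_add' ht (by norm_num), rpow_one,
    sqrt_eq_rpow]

theorem cos_add_add_sqrt_cos_two_mul_mul_cos_two_mul {α θ l m : ℝ} (hl : 0 < l) (hm : 0 < m)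
    (hl3 : l ^ 3 = cos α - sin α) (hm3 : m ^ 3 = cos α + sin α)
    (hcos : cos θ = (l + m) / √(2 * (l ^ 2 + m ^ 2)))
    (hsin : sin θ = (l - m) / √(2 * (l ^ 2 + m ^ 2))) :
    cos (θ + α) + √(cos (2 * θ) * cos (2 * α)) = (l ^ 2 + m ^ 2) ^ ((3 : ℝ) / 2) / √2 := by
  set S := √(2 * (l ^ 2 + m ^ 2))
  have hS : S = √2 * √(l ^ 2 + m ^ 2) := sqrt_mul zero_le_two _
  have hS_pos : 0 < S := by positivity
  have hS_sq : S ^ 2 = 2 * (l ^ 2 + m ^ 2) := sq_sqrt (by positivity)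
  have hcos_add : cos (θ + α) = (l ^ 4 + m ^ 4) / S := by
    rw [cos_add, hcos, hsin]
    field_simp
    linear_combination -(l * hl3 + m * hm3)
  have hprod : cos (2 * θ) * cos (2 * α) = (2 * l ^ 2 * m ^ 2 / S) ^ 2 := by
    rw [cos_two_mul', cos_two_mul', hcos, hsin, div_pow, div_pow, div_pow, hS_sq]
    field_simp
    linear_combination -4 * l * m * ((cos α + sin α) * hl3 + l ^ 3 * hm3)
  have hsqrt : √(l ^ 2 + m ^ 2) ^ 2 = l ^ 2 + m ^ 2 := sq_sqrt (by positivity)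
  rw [hcos_add, hprod, sqrt_sq (by positivity), rpow_three_halves (by positivity), hS]
  field_simp
  linear_combination -(l ^ 2 + m ^ 2) * hsqrt

theorem value_at_critical_point_general
    (α : ℝ) (hα : α ∈ Set.Ioo (-(π / 4)) (π / 4))
    (l m θ₀ : ℝ)
    (hl : l = (Real.cos α - Real.sin α) ^ ((1 : ℝ) / 3))
    (hm : m = (Real.cos α + Real.sin α) ^ ((1 : ℝ) / 3))
    (hcos : Real.cos θ₀ = (l + m) / Real.sqrt (2 * (l ^ 2 + m ^ 2)))
    (hsin : Real.sin θ₀ = (l - m) / Real.sqrt (2 * (l ^ 2 + m ^ 2))) :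
    Real.cos (θ₀ + α) + Real.sqrt (Real.cos (2 * θ₀) * Real.cos (2 * α)) =
        (l ^ 2 + m ^ 2) ^ ((3 : ℝ) / 2) / Real.sqrt 2 ∧
    Real.cos (θ₀ + α) + Real.sqrt (Real.cos (2 * θ₀) * Real.cos (2 * α)) =
        1 / Real.sqrt 2 *
          ((1 - Real.sin (2 * α)) ^ ((1 : ℝ) / 3) +
            (1 + Real.sin (2 * α)) ^ ((1 : ℝ) / 3)) ^ ((3 : ℝ) / 2) := by
  have hsub := cos_sub_sin_pos ⟨by linarith [hα.1, pi_pos], hα.2⟩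
  have hadd := cos_add_sin_pos ⟨hα.1, by linarith [hα.2, pi_pos]⟩
  have hvalue := cos_add_add_sqrt_cos_two_mul_mul_cos_two_mul
    (hl ▸ rpow_pos_of_pos hsub _) (hm ▸ rpow_pos_of_pos hadd _)
    (hl ▸ rpow_one_third_pow_three hsub.le) (hm ▸ rpow_one_third_pow_three hadd.le) hcos hsin
  refine ⟨hvalue, ?_⟩
  rw [hvalue, one_sub_sin_two_mul, one_add_sin_two_mul, ← rpow_pow_comm hsub.le,
    ← rpow_pow_comm hadd.le, ← hl, ← hm, div_eq_inv_mul, one_div]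

/-- Value of `f_α` at the critical point `θ₀`. With
`λ = (cos α − sin α)^{1/3}`, `μ = (cos α + sin α)^{1/3}` and `θ₀ ∈ (−π/4, π/4)` given by
`cos θ₀ = (λ+μ)/√(2(λ²+μ²))`, `sin θ₀ = (λ−μ)/√(2(λ²+μ²))`, one has
`cos(θ₀+α) + √(cos 2θ₀ · cos 2α) = (λ²+μ²)^{3/2}/√2
  = (1/√2)·((1−sin 2α)^{1/3}+(1+sin 2α)^{1/3})^{3/2}`. -/
theorem value_at_critical_point
    (α : ℝ) (hα : α ∈ Set.Ioo (-(π / 4)) (π / 4))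
    (l m θ₀ : ℝ)
    (hl : l = (Real.cos α - Real.sin α) ^ ((1 : ℝ) / 3))
    (hm : m = (Real.cos α + Real.sin α) ^ ((1 : ℝ) / 3))
    (hθ₀ : θ₀ ∈ Set.Ioo (-(π / 4)) (π / 4))
    (hcos : Real.cos θ₀ = (l + m) / Real.sqrt (2 * (l ^ 2 + m ^ 2)))
    (hsin : Real.sin θ₀ = (l - m) / Real.sqrt (2 * (l ^ 2 + m ^ 2))) :
    Real.cos (θ₀ + α) + Real.sqrt (Real.cos (2 * θ₀) * Real.cos (2 * α)) =
        (l ^ 2 + m ^ 2) ^ ((3 : ℝ) / 2) / Real.sqrt 2 ∧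
    Real.cos (θ₀ + α) + Real.sqrt (Real.cos (2 * θ₀) * Real.cos (2 * α)) =
        1 / Real.sqrt 2 *
          ((1 - Real.sin (2 * α)) ^ ((1 : ℝ) / 3) +
            (1 + Real.sin (2 * α)) ^ ((1 : ℝ) / 3)) ^ ((3 : ℝ) / 2) :=
  value_at_critical_point_general α hα l m θ₀ hl hm hcos hsin
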